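/- arXiv:0909.2879 — 6 statements merged into one kernel-verified Lean document; each statement's English description precedes it below -/
import Mathlib

section
/- Every connected balanced directed multigraph with at least one edge admits an Eulerian circuit: there exists a list e₁, …, e_N (with N = |E|) containing every edge of E exactly once, such that t eᵢ = s eᵢ₊₁ for all 1 ≤ i < N and t e_N = s e₁. -/
/-!
Take a longest trail. If it were open, its final vertex would be entered once more than it is
left along the trail, so by balance an unused edge leaves that vertex and the trail could be
extended. Hence it is closed. If it missed an edge, connectivity would give an unused edge
incident to a vertex of the trail; rotating the closed trail to start at that vertex, the edge
can be attached at one of its ends, again contradicting maximality.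
-/

open List

theorem Relation.EqvGen.iff_of_rel_imp_iff {α : Type*} {r : α → α → Prop} {P : α → Prop}
    (h : ∀ a b, r a b → (P a ↔ P b)) {a b : α} (hab : Relation.EqvGen r a b) : P a ↔ P b :=
  have hP : Equivalence fun a b => P a ↔ P b := ⟨fun _ => Iff.rfl, Iff.symm, Iff.trans⟩
  hP.eqvGen_iff.1 (hab.mono h)

theorem List.count_map_eq_countP {α β : Type*} [DecidableEq β] (f : α → β) (l : List α)
    (b : β) : (l.map f).count b = l.countP (f · = b) := by
  simp [List.count, List.countP_map, Function.comp_def, _root_.beq_eq_decide]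

section Nodup

variable {α : Type*} [Fintype α] {l : List α} {p : α → Prop} [DecidablePred p]

theorem List.Nodup.countP_le_card_filter (hl : l.Nodup) :
    l.countP p ≤ (Finset.univ.filter p).card := by
  classical
  rw [← hl.card_eq_countP]
  exact Finset.card_le_card (Finset.filter_subset_filter p (Finset.subset_univ _))

theorem List.Nodup.exists_notMem_of_countP_lt (hl : l.Nodup)
    (hlt : l.countP p < (Finset.univ.filter p).card) : ∃ a ∉ l, p a := by
  classical
  rw [← hl.card_eq_countP] at hlt
  obtain ⟨a, ha, hal⟩ := Finset.exists_mem_notMem_of_card_lt_card hlt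
  simp only [Finset.mem_filter, Finset.mem_univ, true_and, mem_toFinset] at ha hal
  exact ⟨a, fun h => hal ⟨h, ha⟩, ha⟩

end Nodup

section Cycle

variable {α : Type*} {r : α → α → Prop} {l : List α}

theorem Cycle.chain_coe_iff (hl : l ≠ []) :
    Cycle.Chain r (l : Cycle α) ↔ l.IsChain r ∧ r (l.getLast hl) (l.head hl) := by
  rw [Cycle.chain_ne_nil r hl, isChain_cons, head?_eq_some_head hl]
  simp [and_comm]

theorem Cycle.Chain.exists_isRotated_cons (hc : Cycle.Chain r (l : Cycle α)) {x : α}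
    (hx : x ∈ l) :
    ∃ l', l ~r x :: l' ∧ (x :: l').IsChain r ∧ ∀ a ∈ (x :: l').getLast?, r a x := by
  obtain ⟨A, B, rfl⟩ := append_of_mem hx
  have hrot : A ++ x :: B ~r x :: (B ++ A) := isRotated_append
  rw [Cycle.coe_eq_coe.2 hrot, Cycle.chain_coe_cons, ← cons_append, isChain_append] at hc
  exact ⟨B ++ A, hrot, hc.1, by simpa using hc.2.2⟩

theorem Cycle.Chain.exists_mem_rel (hc : Cycle.Chain r (l : Cycle α)) {x : α} (hx : x ∈ l) :
    ∃ y ∈ l, r x y := by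
  obtain ⟨l', hrot, hchain, hlast⟩ := hc.exists_isRotated_cons hx
  cases l' with
  | nil => exact ⟨x, hx, hlast x (by simp)⟩
  | cons y _ => exact ⟨y, hrot.mem_iff.2 (by simp), (isChain_cons_cons.1 hchain).1⟩

end Cycle

namespace Multigraph

variable {V E : Type*} (s t : E → V)

abbrev Follows (e e' : E) : Prop := t e = s e'

def IsTrail (L : List E) : Prop := L.Nodup ∧ L.IsChain (Follows s t)

def IsBalanced [Fintype E] [DecidableEq V] : Prop :=
  ∀ v : V, (Finset.univ.filter fun e => t e = v).card = (Finset.univ.filter fun e => s e = v).card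

def IsConnected : Prop :=
  ∀ a b : V, Relation.EqvGen (fun a b : V => ∃ e : E, s e = a ∧ t e = b) a b

variable {s t} {L : List E} {e : E}

theorem IsTrail.concat (hL : IsTrail s t L) (he : e ∉ L) (h : ∀ a ∈ L.getLast?, t a = s e) :
    IsTrail s t (L ++ [e]) :=
  ⟨by simpa using hL.1.concat he, hL.2.append (isChain_singleton e) (by simpa using h)⟩

theorem IsTrail.cons (hL : IsTrail s t L) (he : e ∉ L) (h : ∀ b ∈ L.head?, t e = s b) :
    IsTrail s t (e :: L) :=
  ⟨nodup_cons.2 ⟨he, hL.1⟩, hL.2.cons h⟩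

theorem cons_map_target_eq_map_source_append :
    ∀ {L : List E}, L.IsChain (Follows s t) → (h : L ≠ []) →
      s (L.head h) :: L.map t = L.map s ++ [t (L.getLast h)]
  | [_], _, _ => rfl
  | e :: e' :: L, hc, _ => by
    obtain ⟨he, hc'⟩ := isChain_cons_cons.mp hc
    have ih := cons_map_target_eq_map_source_append hc' (cons_ne_nil e' L)
    simp only [List.map_cons, head_cons, getLast_cons_cons] at ih ⊢
    rw [cons_append, ← ih, he]

theorem IsTrail.exists_notMem_source_eq_of_open [Fintype E] [DecidableEq V]
    (balanced : IsBalanced s t)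
    (hL : IsTrail s t L) (h : L ≠ []) (hopen : t (L.getLast h) ≠ s (L.head h)) :
    ∃ e ∉ L, s e = t (L.getLast h) := by
  have hcount :=
    congrArg (count (t (L.getLast h))) (cons_map_target_eq_map_source_append hL.2 h)
  simp only [count_cons, count_append, count_nil, count_map_eq_countP, beq_iff_eq,
    if_neg hopen.symm, ↓reduceIte] at hcount
  apply hL.1.exists_notMem_of_countP_lt
  calc L.countP (s · = t (L.getLast h)) < L.countP (t · = t (L.getLast h)) := by omega
    _ ≤ _ := hL.1.countP_le_card_filter
    _ = _ := balanced _

theorem exists_notMem_incident_of_connected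
    (connected : IsConnected s t)
    (hc : Cycle.Chain (Follows s t) (L : Cycle E)) (hne : L ≠ []) (he : e ∉ L) :
    ∃ e' ∉ L, ∃ x ∈ L, s x = s e' ∨ s x = t e' := by
  by_contra! hno
  -- Otherwise the set of vertices on `L` is closed under edges in both directions.
  have hinv : ∀ a b, (∃ e : E, s e = a ∧ t e = b) →
      ((∃ x ∈ L, s x = a) ↔ (∃ x ∈ L, s x = b)) := by
    rintro _ _ ⟨e', rfl, rfl⟩
    by_cases he' : e' ∈ L
    · obtain ⟨y, hy, hrel⟩ := hc.exists_mem_rel he'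
      exact iff_of_true ⟨e', he', rfl⟩ ⟨y, hy, hrel.symm⟩
    · exact iff_of_false (fun ⟨x, hx, hxe⟩ => (hno e' he' x hx).1 hxe)
        (fun ⟨x, hx, hxe⟩ => (hno e' he' x hx).2 hxe)
  obtain ⟨x, hx, hxe⟩ := ((connected (s e) (s (L.head hne))).iff_of_rel_imp_iff hinv).2
    ⟨_, head_mem hne, rfl⟩
  exact (hno e he x hx).1 hxe

theorem IsTrail.exists_longer_of_open [Fintype E] [DecidableEq V]
    (balanced : IsBalanced s t)
    (hL : IsTrail s t L) (h : L ≠ []) (hopen : t (L.getLast h) ≠ s (L.head h)) :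
    ∃ L', IsTrail s t L' ∧ L.length < L'.length := by
  obtain ⟨e, he, hse⟩ := hL.exists_notMem_source_eq_of_open balanced h hopen
  exact ⟨L ++ [e], hL.concat he (by simp [getLast?_eq_some_getLast h, hse]), by simp⟩

theorem IsTrail.exists_longer_of_notMem
    (connected : IsConnected s t)
    (hL : IsTrail s t L) (hc : Cycle.Chain (Follows s t) (L : Cycle E)) (hne : L ≠ [])
    (he : e ∉ L) : ∃ L', IsTrail s t L' ∧ L.length < L'.length := by
  obtain ⟨e', he', x, hx, hxe⟩ := exists_notMem_incident_of_connected connected hc hne he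
  obtain ⟨l, hrot, hchain, hlast⟩ := hc.exists_isRotated_cons hx
  have hrotL : IsTrail s t (x :: l) := ⟨hrot.nodup_iff.1 hL.1, hchain⟩
  have hlen : L.length = (x :: l).length := hrot.perm.length_eq
  have he'' : e' ∉ x :: l := by rwa [← hrot.mem_iff]
  rcases hxe with hxe | hxe
  · exact ⟨x :: l ++ [e'], hrotL.concat he'' (hxe ▸ hlast), by simp [hlen]⟩
  · exact ⟨e' :: x :: l, hrotL.cons he'' (by simp [hxe]), by simp [hlen]⟩

variable (s t) in
theorem exists_longest_trail [Fintype E] [Nonempty E] :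
    ∃ L, IsTrail s t L ∧ L ≠ [] ∧ ∀ L', IsTrail s t L' → L'.length ≤ L.length := by
  classical
  obtain ⟨e⟩ := ‹Nonempty E›
  let P (n : ℕ) : Prop := ∃ L, IsTrail s t L ∧ L.length = n
  have hone : P 1 := ⟨[e], ⟨nodup_singleton e, isChain_singleton e⟩, rfl⟩
  have hcard : 1 ≤ Fintype.card E := Fintype.card_pos
  obtain ⟨L, hL, hlen⟩ := Nat.findGreatest_spec hcard hone
  refine ⟨L, hL, ne_nil_of_length_pos ?_, fun L' hL' => ?_⟩
  · exact hlen ▸ Nat.le_findGreatest hcard hone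
  · exact hlen ▸ Nat.le_findGreatest hL'.1.length_le_card ⟨L', hL', rfl⟩

end Multigraph

theorem stmt_0_general {V E : Type*} [Fintype E] [Nonempty E]
    [DecidableEq V] (s t : E → V)
    (balanced : ∀ v : V,
      (Finset.univ.filter fun e => t e = v).card =
        (Finset.univ.filter fun e => s e = v).card)
    (connected : ∀ a b : V,
      Relation.EqvGen (fun a b : V => ∃ e : E, s e = a ∧ t e = b) a b) :
    ∃ L : List E, L.length = Fintype.card E ∧ L.Nodup ∧ (∀ e : E, e ∈ L) ∧
      L.Chain' (fun e e' => t e = s e') ∧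
      L.getLast?.map t = L.head?.map s := by
  obtain ⟨L, hL, hne, hmax⟩ := Multigraph.exists_longest_trail s t
  have hclosed : t (L.getLast hne) = s (L.head hne) := by
    by_contra hopen
    obtain ⟨L', hL', hlt⟩ := hL.exists_longer_of_open balanced hne hopen
    exact (hmax L' hL').not_gt hlt
  have hall : ∀ e, e ∈ L := by
    intro e
    by_contra he
    obtain ⟨L', hL', hlt⟩ :=
      hL.exists_longer_of_notMem connected ((Cycle.chain_coe_iff hne).2 ⟨hL.2, hclosed⟩) hne he
    exact (hmax L' hL').not_gt hlt
  refine ⟨L, ?_, hL.1, hall, hL.2, ?_⟩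
  · classical
    rw [← toFinset_card_of_nodup hL.1,
      Finset.eq_univ_of_forall fun e => mem_toFinset.2 (hall e), Finset.card_univ]
  · simp [getLast?_eq_some_getLast hne, head?_eq_some_head hne, hclosed]

/-- Every connected balanced directed multigraph with at least one edge admits an
Eulerian circuit: a list of edges containing every edge exactly once, consecutive
edges matching target-to-source, and the target of the last edge equal to the
source of the first. -/
theorem stmt_0 {V E : Type*} [Fintype V] [Nonempty V] [Fintype E] [Nonempty E]
    [DecidableEq V] (s t : E → V)
    (balanced : ∀ v : V,
      (Finset.univ.filter fun e => t e = v).card =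
        (Finset.univ.filter fun e => s e = v).card)
    (connected : ∀ a b : V,
      Relation.EqvGen (fun a b : V => ∃ e : E, s e = a ∧ t e = b) a b) :
    ∃ L : List E, L.length = Fintype.card E ∧ L.Nodup ∧ (∀ e : E, e ∈ L) ∧
      L.Chain' (fun e e' => t e = s e') ∧
      L.getLast?.map t = L.head?.map s :=
  stmt_0_general s t balanced connected
end

section
/- Let V be a finite nonempty type, let n ≥ 1, and let s, t : Fin n → V be source and target maps of a directed multigraph with n edges. Then the multigraph is connected and balanced if and only if there exist a surjective map f : ZMod n → V and a bijection φ : ZMod n ≃ Fin n such that s (φ i) = f i and t (φ i) = f (i + 1) for all i ∈ ZMod n. (Every toric Calabi–Yau quiver diagram is obtained from the cyclically directed n-gon by identifying vertices, and conversely.) -/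
/-!
A balanced multigraph admits a transition system: a permutation `σ` of the edges with
`s (σ e) = t e`, pairing the edges entering each vertex with those leaving it. Take one whose
cycle through a fixed edge is as long as possible. If that cycle missed some edge, connectivity
would give edges `e` on it and `e'` off it with the same target, and `σ * swap e e'` would still
be a transition system whose cycle contains both cycles. So the cycle is an Eulerian circuit,
which enumerates the edges as the sides of the `n`-gon. Conversely, walking around the `n`-gon
connects all vertices, and the successor map `i ↦ i + 1` is a transition system.
-/

open Equiv Equiv.Perm Finset

namespace Equiv.Perm

variable {α : Type*}

theorem SameCycle.mem_of_apply_mem_of_ne [Finite α] {σ : Perm α} {S : Set α} {a b : α}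
    (hab : σ.SameCycle a b) (ha : a ∈ S) (hS : ∀ x ∈ S, x ≠ b → σ x ∈ S) : b ∈ S := by
  obtain ⟨k, rfl⟩ := hab.exists_nat_pow_eq
  by_contra hb
  suffices ∀ j, (σ ^ j) a ∈ S from hb (this k)
  intro j
  induction j with
  | zero => exact ha
  | succ j ih =>
    rw [pow_succ', mul_apply]
    exact hS _ ih fun h => hb (h ▸ ih)

theorem SameCycle.mul_swap_of_not_sameCycle [Finite α] [DecidableEq α] {σ : Perm α}
    {x y z w : α} (hxy : σ.SameCycle x y) (hxz : ¬σ.SameCycle x z)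
    (hw : σ.SameCycle x w ∨ σ.SameCycle z w) : (σ * swap y z).SameCycle x w := by
  -- From `x`, `τ` follows `σ` up to `y`, then runs once around the `σ`-cycle of `z` and
  -- returns to `σ y`; so the `τ`-cycle of `x` is closed under `σ`.
  set τ := σ * swap y z
  have hτy : τ y = σ z := by simp [τ]
  have hτz : τ z = σ y := by simp [τ]
  have hτ : ∀ u, u ≠ y → u ≠ z → τ u = σ u := fun u hy hz => by
    simp [τ, swap_apply_of_ne_of_ne hy hz]
  set O : Set α := {u | τ.SameCycle x u}
  have hO : ∀ u ∈ O, τ u ∈ O := fun u hu => sameCycle_apply_right.2 hu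
  have hyO : y ∈ O := by
    refine (hxy.mem_of_apply_mem_of_ne (S := O ∩ {u | σ.SameCycle x u}) ⟨.refl _ _, .refl _ _⟩
      fun u hu huy => ⟨?_, sameCycle_apply_right.2 hu.2⟩).1
    rw [← hτ u huy fun huz => hxz (huz ▸ hu.2)]
    exact hO u hu.1
  have hzO : z ∈ O := by
    refine (sameCycle_apply_left.2 (SameCycle.refl σ z)).mem_of_apply_mem_of_ne
      (S := O ∩ {u | σ.SameCycle z u}) ⟨hτy ▸ hO y hyO, sameCycle_apply_right.2 (.refl _ _)⟩
      (fun u hu huz => ⟨?_, sameCycle_apply_right.2 hu.2⟩) |>.1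
    rw [← hτ u (fun huy => hxz (hxy.trans (huy ▸ hu.2).symm)) huz]
    exact hO u hu.1
  have hσO : ∀ u ∈ O, u ≠ w → σ u ∈ O := fun u hu _ => by
    by_cases huy : u = y
    · exact huy ▸ hτz ▸ hO z hzO
    by_cases huz : u = z
    · exact huz ▸ hτy ▸ hO y hyO
    · exact hτ u huy huz ▸ hO u hu
  rcases hw with hw | hw
  · exact hw.mem_of_apply_mem_of_ne (SameCycle.refl τ x) hσO
  · exact hw.mem_of_apply_mem_of_ne hzO hσO

theorem exists_zmod_equiv_of_forall_sameCycle [Finite α] {σ : Perm α} {x : α} {n : ℕ}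
    (h : ∀ y, σ.SameCycle x y) (hn : Nat.card α = n) :
    ∃ φ : ZMod n ≃ α, ∀ i, φ (i + 1) = σ (φ i) := by
  have horbit : ∀ y, y ∈ MulAction.orbit (Subgroup.zpowers σ) x := fun y => by
    obtain ⟨i, rfl⟩ := h y
    exact ⟨⟨σ ^ i, Subgroup.zpow_mem_zpowers σ i⟩, rfl⟩
  let φ := (MulAction.orbitZPowersEquiv σ x).symm.trans (subtypeUnivEquiv horbit)
  have hφ : ∀ i, φ (i + 1) = σ (φ i) := fun i => by
    obtain ⟨k, rfl⟩ := ZMod.intCast_surjective i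
    rw [← Int.cast_one, ← Int.cast_add, add_comm]
    simp only [φ, trans_apply, MulAction.orbitZPowersEquiv_symm_apply', zpow_one_add, mul_smul]
    rfl
  have hperiod : Function.minimalPeriod (σ • ·) x = n := by
    rw [← hn, ← Nat.card_zmod (Function.minimalPeriod _ _)]
    exact Nat.card_congr φ
  rw [← hperiod]
  exact ⟨φ, hφ⟩

end Equiv.Perm

theorem Relation.EqvGen.iff_of_forall_rel {β : Type*} {r : β → β → Prop} {P : β → Prop}
    (hr : ∀ a b, r a b → (P a ↔ P b)) {a b : β} (h : Relation.EqvGen r a b) : P a ↔ P b := by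
  induction h with
  | rel a b hab => exact hr a b hab
  | refl => exact Iff.rfl
  | symm _ _ _ ih => exact ih.symm
  | trans _ _ _ _ _ ih₁ ih₂ => exact ih₁.trans ih₂

theorem Relation.EqvGen.of_rel_add_one {β : Type*} {n : ℕ} [NeZero n] {r : β → β → Prop}
    {g : ZMod n → β} (h : ∀ i, r (g i) (g (i + 1))) (i j : ZMod n) :
    Relation.EqvGen r (g i) (g j) := by
  have hk : ∀ k : ℕ, Relation.EqvGen r (g i) (g (i + k)) := fun k => by
    induction k with
    | zero => simpa using Relation.EqvGen.refl _
    | succ k ih =>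
      exact ih.trans _ _ _ (by simpa [add_assoc] using Relation.EqvGen.rel _ _ (h (i + k)))
  simpa using hk (j - i).val

section Multigraph

variable {E V : Type*} {s t : E → V}

theorem card_filter_target_eq_iff_exists_perm [Fintype E] [DecidableEq V] :
    (∀ v, #{e | t e = v} = #{e | s e = v}) ↔ ∃ σ : Perm E, ∀ e, s (σ e) = t e := by
  constructor
  · intro h
    refine ⟨ofFiberEquiv fun v => Fintype.equivOfCardEq ?_, ofFiberEquiv_map _⟩
    rw [Fintype.card_subtype, Fintype.card_subtype, h]
  · rintro ⟨σ, hσ⟩ v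
    exact card_equiv σ fun e => by simp [hσ]

variable (s t) in
def EdgeRel (a b : V) : Prop := ∃ e, s e = a ∧ t e = b

theorem exists_target_eq_of_not_sameCycle (hconn : ∀ a b, Relation.EqvGen (EdgeRel s t) a b)
    {σ : Perm E} (hσ : ∀ e, s (σ e) = t e) {e₀ e₁ : E} (h₁ : ¬σ.SameCycle e₀ e₁) :
    ∃ e e', σ.SameCycle e₀ e ∧ ¬σ.SameCycle e₀ e' ∧ t e = t e' := by
  by_contra! H
  set P : V → Prop := fun v => ∃ e, σ.SameCycle e₀ e ∧ t e = v
  have hP : ∀ d, P (t d) ↔ σ.SameCycle e₀ d := fun d =>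
    ⟨fun ⟨e, he, hed⟩ => by_contra fun hd => H e d he hd hed, fun hd => ⟨d, hd, rfl⟩⟩
  have hPs : ∀ d, P (s d) ↔ σ.SameCycle e₀ d := fun d => by
    rw [← apply_symm_apply σ d, hσ, hP, sameCycle_apply_right]
  have := (hconn (t e₀) (t e₁)).iff_of_forall_rel (P := P) <| by
    rintro _ _ ⟨d, rfl, rfl⟩
    rw [hP, hPs]
  exact h₁ ((hP e₁).1 (this.1 ((hP e₀).2 (.refl _ _))))

theorem exists_perm_forall_sameCycle [Fintype E]
    (hconn : ∀ a b, Relation.EqvGen (EdgeRel s t) a b)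
    (htrans : ∃ σ : Perm E, ∀ e, s (σ e) = t e) (e₀ : E) :
    ∃ σ : Perm E, (∀ e, s (σ e) = t e) ∧ ∀ e, σ.SameCycle e₀ e := by
  classical
  obtain ⟨σ, hσ, hmax⟩ := exists_max_image {σ : Perm E | ∀ e, s (σ e) = t e}
    (fun σ => #{e | σ.SameCycle e₀ e}) (by simpa [Finset.Nonempty] using htrans)
  simp only [mem_filter, mem_univ, true_and] at hσ hmax
  refine ⟨σ, hσ, fun e₁ => by_contra fun h₁ => ?_⟩
  obtain ⟨e, e', he, he', hee'⟩ := exists_target_eq_of_not_sameCycle hconn hσ h₁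
  have hτ : ∀ d, s ((σ * swap e e') d) = t d := fun d => by
    rw [mul_apply, hσ, swap_apply_def]
    split_ifs <;> subst_vars <;> simp [hee']
  have hsub : ({d | σ.SameCycle e₀ d} : Finset E) ⊂
      ({d | (σ * swap e e').SameCycle e₀ d} : Finset E) := by
    refine (ssubset_iff_of_subset fun d hd => ?_).2 ⟨e', ?_, by simpa using he'⟩
    · simp only [mem_filter, mem_univ, true_and] at hd ⊢
      exact he.mul_swap_of_not_sameCycle he' (.inl hd)
    · simpa using he.mul_swap_of_not_sameCycle he' (.inr (.refl _ _))
  exact (card_lt_card hsub).not_ge (hmax _ hτ)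

end Multigraph

theorem stmt_3_general {V : Type*} [DecidableEq V]
    (n : ℕ) (hn : 1 ≤ n) (s t : Fin n → V) :
    ((∀ a b : V, Relation.EqvGen (fun a b : V => ∃ e : Fin n, s e = a ∧ t e = b) a b) ∧
      (∀ v : V,
        (Finset.univ.filter fun e => t e = v).card =
          (Finset.univ.filter fun e => s e = v).card)) ↔
    ∃ (f : ZMod n → V) (φ : ZMod n ≃ Fin n), Function.Surjective f ∧
      ∀ i : ZMod n, s (φ i) = f i ∧ t (φ i) = f (i + 1) := by
  have : NeZero n := ⟨by omega⟩
  constructor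
  · rintro ⟨hconn, hbal⟩
    obtain ⟨σ, hσ, hcyc⟩ := exists_perm_forall_sameCycle (s := s) hconn
      (card_filter_target_eq_iff_exists_perm.1 hbal) 0
    obtain ⟨φ, hφ⟩ := exists_zmod_equiv_of_forall_sameCycle hcyc (Nat.card_fin n)
    refine ⟨s ∘ φ, φ, fun v => ?_, fun i => ⟨rfl, by simp [hφ, hσ]⟩⟩
    have hrange := (hconn (s 0) v).iff_of_forall_rel (P := (· ∈ Set.range s)) <| by
      rintro _ _ ⟨d, rfl, rfl⟩
      exact iff_of_true ⟨d, rfl⟩ ⟨σ d, hσ d⟩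
    obtain ⟨e, rfl⟩ := hrange.1 ⟨0, rfl⟩
    exact ⟨φ.symm e, by simp⟩
  · rintro ⟨f, φ, hf, hφ⟩
    refine ⟨?_, card_filter_target_eq_iff_exists_perm.2
      ⟨φ.symm.trans ((Equiv.addRight 1).trans φ), fun e => ?_⟩⟩
    · intro a b
      obtain ⟨i, rfl⟩ := hf a
      obtain ⟨j, rfl⟩ := hf b
      exact Relation.EqvGen.of_rel_add_one (fun i => ⟨φ i, hφ i⟩) i j
    · simpa [(hφ _).1] using ((hφ (φ.symm e)).2).symm

/-- A directed multigraph with `n ≥ 1` edges is connected and balanced if and only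
if it is obtained from the cyclically directed `n`-gon by identifying vertices
along a surjective map `f : ZMod n → V`. -/
theorem stmt_3 {V : Type*} [Fintype V] [Nonempty V] [DecidableEq V]
    (n : ℕ) (hn : 1 ≤ n) (s t : Fin n → V) :
    ((∀ a b : V, Relation.EqvGen (fun a b : V => ∃ e : Fin n, s e = a ∧ t e = b) a b) ∧
      (∀ v : V,
        (Finset.univ.filter fun e => t e = v).card =
          (Finset.univ.filter fun e => s e = v).card)) ↔
    ∃ (f : ZMod n → V) (φ : ZMod n ≃ Fin n), Function.Surjective f ∧
      ∀ i : ZMod n, s (φ i) = f i ∧ t (φ i) = f (i + 1) :=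
  stmt_3_general n hn s t
end

section
/- Let (V, E, s, t) be a balanced directed multigraph and let C ⊆ E be the set of edges of a closed trail. Then the multigraph restricted to the edge set E \ C (with the same vertex set and the restricted source and target maps) is again balanced. -/
/-!
Along a closed trail every edge leaving a vertex is preceded by an edge entering it, so the
multiset of targets of the trail equals the multiset of its sources (the targets are the sources
rotated by one step). Hence the trail contributes equally to the indegree and the outdegree of
every vertex, and since its edges are distinct these contributions can be subtracted from the
balanced degrees.
-/

namespace List

variable {α β : Type*}

lemma map_eq_map_tail_append_getLast_of_isChain (s t : α → β) :
    ∀ (l : List α) (hne : l ≠ []), l.IsChain (fun a b => t a = s b) →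
      l.map t = l.tail.map s ++ [t (l.getLast hne)]
  | [a], _, _ => rfl
  | a :: b :: l, _, hc => by
    rw [isChain_cons_cons] at hc
    rw [map_cons, map_eq_map_tail_append_getLast_of_isChain s t (b :: l) (cons_ne_nil b l) hc.2,
      hc.1]
    rfl

lemma perm_map_of_isChain_of_getLast_eq_head {s t : α → β} {l : List α}
    (hc : l.IsChain fun a b => t a = s b) (hne : l ≠ [])
    (hclosed : t (l.getLast hne) = s (l.head hne)) : l.map t ~ l.map s := by
  obtain ⟨a, l, rfl⟩ := exists_cons_of_ne_nil hne
  rw [map_eq_map_tail_append_getLast_of_isChain s t _ hne hc, hclosed]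
  exact perm_append_singleton _ _

end List

open Finset in
lemma Finset.card_filter_eq_countP_map_add_card_filter_not_mem {α β : Type*} [Fintype α]
    [DecidableEq α] [DecidableEq β] {l : List α} (hl : l.Nodup) (f : α → β) (b : β) :
    #{a | f a = b} = (l.map f).countP (· = b) + #{a | a ∉ l ∧ f a = b} := by
  have hmem : #{a | a ∈ l ∧ f a = b} = (l.map f).countP (· = b) := by
    rw [List.countP_map, List.countP_eq_length_filter,
      ← List.toFinset_card_of_nodup (hl.filter _)]
    congr 1
    ext a
    simp [and_comm]
  rw [← hmem, ← card_union_of_disjoint (disjoint_filter.2 fun a _ h₁ h₂ => h₂.1 h₁.1)]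
  congr 1
  ext a
  simp only [mem_filter, mem_univ, true_and, mem_union]
  tauto

theorem stmt_6_general {V E : Type*} [Fintype E]
    [DecidableEq V] [DecidableEq E] (s t : E → V)
    (balanced : ∀ v : V,
      (Finset.univ.filter fun e => t e = v).card =
        (Finset.univ.filter fun e => s e = v).card)
    (L : List E) (hne : L ≠ []) (hnd : L.Nodup)
    (hchain : L.Chain' fun e e' => t e = s e')
    (hclosed : t (L.getLast hne) = s (L.head hne)) :
    ∀ v : V,
      (Finset.univ.filter fun e => e ∉ L ∧ t e = v).card =
        (Finset.univ.filter fun e => e ∉ L ∧ s e = v).card := by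
  intro v
  have hv := balanced v
  rw [Finset.card_filter_eq_countP_map_add_card_filter_not_mem hnd t,
    Finset.card_filter_eq_countP_map_add_card_filter_not_mem hnd s,
    (List.perm_map_of_isChain_of_getLast_eq_head hchain hne hclosed).countP_eq] at hv
  omega

/-- Removing the edges of a closed trail from a balanced directed multigraph leaves
a balanced multigraph: on the remaining edge set, indegree still equals outdegree
at every vertex. -/
theorem stmt_6 {V E : Type*} [Fintype V] [Nonempty V] [Fintype E]
    [DecidableEq V] [DecidableEq E] (s t : E → V)
    (balanced : ∀ v : V,
      (Finset.univ.filter fun e => t e = v).card =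
        (Finset.univ.filter fun e => s e = v).card)
    (L : List E) (hne : L ≠ []) (hnd : L.Nodup)
    (hchain : L.Chain' fun e e' => t e = s e')
    (hclosed : t (L.getLast hne) = s (L.head hne)) :
    ∀ v : V,
      (Finset.univ.filter fun e => e ∉ L ∧ t e = v).card =
        (Finset.univ.filter fun e => e ∉ L ∧ s e = v).card :=
  stmt_6_general s t balanced L hne hnd hchain hclosed
end

section
/- In a balanced directed multigraph, if e₁, …, eₙ is a trail from v = s e₁ to u = t eₙ with u ≠ v, then there exists an edge e not among e₁, …, eₙ with s e = u. (A walk that never repeats edges can always leave any vertex it reaches, other than its starting vertex; hence a maximal trail must end where it began.) -/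
/-!
Reading off vertices along the trail, `s e₁, t e₁, …, t eₙ` equals `s e₁, …, s eₙ, t eₙ`. Counting
occurrences of `u ≠ s e₁` shows that the trail enters `u` once more than it leaves it. If every
out-edge of `u` were on the trail, the trail (having no repeated edges) would use more in-edges of
`u` than `u` has out-edges, contradicting balance.
-/

theorem List.IsChain.head_cons_map_eq_map_append_getLast {E V : Type*} {s t : E → V} :
    ∀ {L : List E} (hne : L ≠ []), L.IsChain (fun e e' => t e = s e') →
      s (L.head hne) :: L.map t = L.map s ++ [t (L.getLast hne)]
  | [e], _, _ => rfl
  | e :: e' :: rest, _, hchain => by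
    have ih := head_cons_map_eq_map_append_getLast (List.cons_ne_nil e' rest) hchain.tail
    rw [List.getLast_cons (List.cons_ne_nil _ _)]
    simp only [List.head_cons, List.map_cons, List.cons_append] at ih ⊢
    rw [← ih, hchain.rel]

theorem List.Nodup.count_map_eq_card_filter {E V : Type*} [DecidableEq E] [DecidableEq V]
    {L : List E} (hnd : L.Nodup) (f : E → V) (u : V) :
    (L.map f).count u = (L.toFinset.filter (f · = u)).card := by
  rw [hnd.card_eq_countP, List.count_eq_countP, List.countP_map]
  rfl

theorem stmt_7_general {V E : Type*} [Fintype E]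
    [DecidableEq V] [DecidableEq E] (s t : E → V)
    (balanced : ∀ v : V,
      (Finset.univ.filter fun e => t e = v).card =
        (Finset.univ.filter fun e => s e = v).card)
    (L : List E) (hne : L ≠ []) (hnd : L.Nodup)
    (hchain : L.Chain' fun e e' => t e = s e')
    (u v : V) (hv : s (L.head hne) = v) (hu : t (L.getLast hne) = u)
    (huv : u ≠ v) :
    ∃ e : E, e ∉ L ∧ s e = u := by
  by_contra! hL
  have hcount := congrArg (List.count u) (hchain.head_cons_map_eq_map_append_getLast hne)
  simp only [List.count_cons, List.count_append, hv, hu, huv.symm,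
    beq_iff_eq, if_true, if_false] at hcount
  have hin : (L.toFinset.filter (t · = u)).card ≤ (Finset.univ.filter (t · = u)).card :=
    Finset.card_le_card (Finset.filter_subset_filter _ (Finset.subset_univ _))
  have hout : (Finset.univ.filter (s · = u)).card ≤ (L.toFinset.filter (s · = u)).card :=
    Finset.card_le_card fun e he => by
      simp only [Finset.mem_filter, List.mem_toFinset] at he ⊢
      exact ⟨not_not.mp fun h => hL e h he.2, he.2⟩
  rw [← hnd.count_map_eq_card_filter] at hin hout
  have := balanced u
  omega

/-- In a balanced directed multigraph, a trail from `v` to `u ≠ v` can always be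
extended: there is an edge not used by the trail whose source is `u`. -/
theorem stmt_7 {V E : Type*} [Fintype V] [Nonempty V] [Fintype E]
    [DecidableEq V] [DecidableEq E] (s t : E → V)
    (balanced : ∀ v : V,
      (Finset.univ.filter fun e => t e = v).card =
        (Finset.univ.filter fun e => s e = v).card)
    (L : List E) (hne : L ≠ []) (hnd : L.Nodup)
    (hchain : L.Chain' fun e e' => t e = s e')
    (u v : V) (hv : s (L.head hne) = v) (hu : t (L.getLast hne) = u)
    (huv : u ≠ v) :
    ∃ e : E, e ∉ L ∧ s e = u :=
  stmt_7_general s t balanced L hne hnd hchain u v hv hu huv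
end

section
/- A finite directed multigraph (V, E, s, t) is balanced if and only if there exists a permutation π of the edge set E such that s (π e) = t e for every edge e. (Such a permutation is exactly an edge assignment matching incoming to outgoing edges at every node; its cycles decompose the quiver into disjoint loops.) -/
open Finset

theorem exists_equiv_forall_comp_eq_iff_card_fiber_eq {α β γ : Type*} [Fintype α] [Fintype β]
    [DecidableEq γ] {f : α → γ} {g : β → γ} :
    (∃ e : α ≃ β, ∀ a, g (e a) = f a) ↔ ∀ c, #{a | f a = c} = #{b | g b = c} := by
  constructor
  · rintro ⟨e, he⟩ c
    rw [← Fintype.card_subtype, ← Fintype.card_subtype]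
    exact Fintype.card_congr (e.subtypeEquiv fun a => by rw [he])
  · intro h
    have fiber_equiv (c : γ) : {a // f a = c} ≃ {b // g b = c} :=
      Fintype.equivOfCardEq (by simpa only [Fintype.card_subtype] using h c)
    exact ⟨Equiv.ofFiberEquiv fiber_equiv, Equiv.ofFiberEquiv_map fiber_equiv⟩

theorem stmt_8_general {V E : Type*} [Fintype E] [DecidableEq V]
    (s t : E → V) :
    (∀ v : V,
      (Finset.univ.filter fun e => t e = v).card =
        (Finset.univ.filter fun e => s e = v).card) ↔
    ∃ π : Equiv.Perm E, ∀ e : E, s (π e) = t e :=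
  exists_equiv_forall_comp_eq_iff_card_fiber_eq.symm

/-- A finite directed multigraph is balanced if and only if there is a permutation
`π` of the edges with `s (π e) = t e` for every edge `e` (an edge assignment
matching incoming to outgoing edges at every node). -/
theorem stmt_8 {V E : Type*} [Fintype V] [Nonempty V] [Fintype E] [DecidableEq V]
    (s t : E → V) :
    (∀ v : V,
      (Finset.univ.filter fun e => t e = v).card =
        (Finset.univ.filter fun e => s e = v).card) ↔
    ∃ π : Equiv.Perm E, ∀ e : E, s (π e) = t e :=
  stmt_8_general s t
end

section
/- Let σ be a finite type and let P and Q be two partitions of σ into nonempty parts (each is a family of pairwise disjoint nonempty subsets of σ whose union is σ) having no part in common. Then the polynomial W = Σ_{p ∈ P} Π_{i ∈ p} Xᵢ − Σ_{q ∈ Q} Π_{i ∈ q} Xᵢ in MvPolynomial σ ℤ has exactly |P| + |Q| monomials in its support, every monomial in its support is squarefree, every coefficient is +1 or −1, and every variable Xᵢ occurs in exactly two monomials of the support, once with coefficient +1 and once with coefficient −1; that is, W satisfies the toric condition. -/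
/-!
Each product `∏ i ∈ p, Xᵢ` is the monomial with coefficient `1` whose exponent vector is the
indicator of `p`, and distinct sets give distinct indicators. So `W` is a sum of distinct
monomials with coefficient `+1` (one per part of `P`) and `−1` (one per part of `Q`), and no
cancellation happens because `P` and `Q` share no part. A variable `Xᵢ` then occurs exactly in
the monomials of the part of `P` and the part of `Q` containing `i`.
-/

namespace MvPolynomial

variable {σ R : Type*}

noncomputable def squarefreeExponent (s : Finset σ) : σ →₀ ℕ :=
  ∑ i ∈ s, Finsupp.single i 1

theorem squarefreeExponent_apply [DecidableEq σ] (s : Finset σ) (i : σ) :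
    squarefreeExponent s i = if i ∈ s then 1 else 0 := by
  simp only [squarefreeExponent, Finsupp.finsetSum_apply, Finsupp.single_apply,
    Finset.sum_ite_eq']

theorem squarefreeExponent_apply_le_one (s : Finset σ) (i : σ) : squarefreeExponent s i ≤ 1 := by
  classical
  rw [squarefreeExponent_apply]
  split <;> simp

theorem squarefreeExponent_apply_pos_iff {s : Finset σ} {i : σ} :
    0 < squarefreeExponent s i ↔ i ∈ s := by
  classical
  rw [squarefreeExponent_apply]
  split <;> simp [*]

theorem squarefreeExponent_injective : Function.Injective (squarefreeExponent (σ := σ)) :=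
  fun _ _ h => Finset.ext fun i => by
    rw [← squarefreeExponent_apply_pos_iff, h, squarefreeExponent_apply_pos_iff]

theorem prod_X_eq_monomial_squarefreeExponent [CommSemiring R] (s : Finset σ) :
    ∏ i ∈ s, (X i : MvPolynomial σ R) = monomial (squarefreeExponent s) 1 :=
  (monomial_sum_one s _).symm

section SignedSum

variable [DecidableEq σ] [CommRing R] {A B : Finset (σ →₀ ℕ)} {m : σ →₀ ℕ}

theorem coeff_sum_monomial_one (A : Finset (σ →₀ ℕ)) (m : σ →₀ ℕ) :
    coeff m (∑ a ∈ A, monomial a (1 : R)) = if m ∈ A then 1 else 0 := by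
  simp only [coeff_sum, coeff_monomial, Finset.sum_ite_eq']

theorem coeff_sum_monomial_sub_sum_monomial_of_mem_left (hAB : Disjoint A B) (hm : m ∈ A) :
    coeff m (∑ a ∈ A, monomial a (1 : R) - ∑ b ∈ B, monomial b 1) = 1 := by
  rw [coeff_sub, coeff_sum_monomial_one, coeff_sum_monomial_one, if_pos hm,
    if_neg (Finset.disjoint_left.1 hAB hm), sub_zero]

theorem coeff_sum_monomial_sub_sum_monomial_of_mem_right (hAB : Disjoint A B) (hm : m ∈ B) :
    coeff m (∑ a ∈ A, monomial a (1 : R) - ∑ b ∈ B, monomial b 1) = -1 := by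
  rw [coeff_sub, coeff_sum_monomial_one, coeff_sum_monomial_one, if_pos hm,
    if_neg (Finset.disjoint_right.1 hAB hm), zero_sub]

theorem support_sum_monomial_sub_sum_monomial [Nontrivial R] (hAB : Disjoint A B) :
    (∑ a ∈ A, monomial a (1 : R) - ∑ b ∈ B, monomial b 1).support = A ∪ B := by
  ext m
  rw [mem_support_iff, Finset.mem_union]
  by_cases hA : m ∈ A
  · simp [coeff_sum_monomial_sub_sum_monomial_of_mem_left hAB hA, hA]
  by_cases hB : m ∈ B
  · simp [coeff_sum_monomial_sub_sum_monomial_of_mem_right hAB hB, hB]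
  simp [coeff_sub, coeff_sum_monomial_one, hA, hB]

end SignedSum

theorem eq_squarefreeExponent_of_apply_pos [DecidableEq σ] {P : Finset (Finset σ)} {p : Finset σ} {i : σ}
    (hp : ∀ p', p' ∈ P ∧ i ∈ p' → p' = p) {m : σ →₀ ℕ}
    (hm : m ∈ P.image squarefreeExponent) (hmi : 0 < m i) : m = squarefreeExponent p := by
  obtain ⟨p', hp'P, rfl⟩ := Finset.mem_image.1 hm
  rw [hp p' ⟨hp'P, squarefreeExponent_apply_pos_iff.1 hmi⟩]

end MvPolynomial

open MvPolynomial in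
theorem stmt_9_general {σ : Type*} [DecidableEq σ]
    (P Q : Finset (Finset σ))
    (hPpart : ∀ i : σ, ∃! p, p ∈ P ∧ i ∈ p)
    (hQpart : ∀ i : σ, ∃! q, q ∈ Q ∧ i ∈ q)
    (hPQ : ∀ p ∈ P, p ∉ Q)
    (W : MvPolynomial σ ℤ)
    (hW : W = (∑ p ∈ P, ∏ i ∈ p, X i) - ∑ q ∈ Q, ∏ i ∈ q, X i) :
    W.support.card = P.card + Q.card ∧
    (∀ m ∈ W.support, ∀ i : σ, m i ≤ 1) ∧
    (∀ m ∈ W.support, W.coeff m = 1 ∨ W.coeff m = -1) ∧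
    (∀ i : σ, ∃ m₁ ∈ W.support, ∃ m₂ ∈ W.support,
      0 < m₁ i ∧ 0 < m₂ i ∧ W.coeff m₁ = 1 ∧ W.coeff m₂ = -1 ∧
      ∀ m ∈ W.support, 0 < m i → m = m₁ ∨ m = m₂) := by
  have he := squarefreeExponent_injective (σ := σ)
  set A := P.image squarefreeExponent
  set B := Q.image squarefreeExponent
  have hAB : Disjoint A B := (Finset.disjoint_image he).2 (Finset.disjoint_left.2 hPQ)
  have hWAB : W = ∑ a ∈ A, monomial a 1 - ∑ b ∈ B, monomial b 1 := by
    simp only [hW, prod_X_eq_monomial_squarefreeExponent, A, B, Finset.sum_image he.injOn]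
  have hsupp : W.support = A ∪ B := hWAB ▸ support_sum_monomial_sub_sum_monomial hAB
  have hcoeffA : ∀ m ∈ A, W.coeff m = 1 := fun m hm =>
    hWAB ▸ coeff_sum_monomial_sub_sum_monomial_of_mem_left hAB hm
  have hcoeffB : ∀ m ∈ B, W.coeff m = -1 := fun m hm =>
    hWAB ▸ coeff_sum_monomial_sub_sum_monomial_of_mem_right hAB hm
  refine ⟨?card, ?squarefree, ?coeff, ?occurrence⟩
  case card =>
    rw [hsupp, Finset.card_union_of_disjoint hAB, Finset.card_image_of_injective _ he,
      Finset.card_image_of_injective _ he]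
  case squarefree =>
    intro m hm i
    rw [hsupp, Finset.mem_union] at hm
    rcases hm with hm | hm <;> obtain ⟨s, -, rfl⟩ := Finset.mem_image.1 hm <;>
      exact squarefreeExponent_apply_le_one s i
  case coeff =>
    intro m hm
    rw [hsupp, Finset.mem_union] at hm
    exact hm.imp (hcoeffA m) (hcoeffB m)
  case occurrence =>
    intro i
    obtain ⟨p, ⟨hpP, hip⟩, hp⟩ := hPpart i
    obtain ⟨q, ⟨hqQ, hiq⟩, hq⟩ := hQpart i
    have hpA : squarefreeExponent p ∈ A := Finset.mem_image_of_mem _ hpP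
    have hqB : squarefreeExponent q ∈ B := Finset.mem_image_of_mem _ hqQ
    refine ⟨_, hsupp ▸ Finset.mem_union_left _ hpA, _, hsupp ▸ Finset.mem_union_right _ hqB,
      squarefreeExponent_apply_pos_iff.2 hip, squarefreeExponent_apply_pos_iff.2 hiq,
      hcoeffA _ hpA, hcoeffB _ hqB, fun m hm hmi => ?_⟩
    rw [hsupp, Finset.mem_union] at hm
    exact hm.imp (eq_squarefreeExponent_of_apply_pos hp · hmi)
      (eq_squarefreeExponent_of_apply_pos hq · hmi)

open MvPolynomial in
/-- Given two partitions `P`, `Q` of a finite type `σ` into nonempty parts with no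
part in common, the polynomial `W = Σ_{p ∈ P} Π_{i ∈ p} Xᵢ − Σ_{q ∈ Q} Π_{i ∈ q} Xᵢ`
has exactly `|P| + |Q|` monomials in its support, every monomial in its support is
squarefree, every coefficient is `+1` or `−1`, and every variable occurs in exactly
two monomials of the support, once with coefficient `+1` and once with coefficient
`−1`: `W` satisfies the toric condition. -/
theorem stmt_9 {σ : Type*} [Fintype σ] [DecidableEq σ]
    (P Q : Finset (Finset σ))
    (hPpart : ∀ i : σ, ∃! p, p ∈ P ∧ i ∈ p) (hPne : ∀ p ∈ P, p.Nonempty)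
    (hQpart : ∀ i : σ, ∃! q, q ∈ Q ∧ i ∈ q) (hQne : ∀ q ∈ Q, q.Nonempty)
    (hPQ : ∀ p ∈ P, p ∉ Q)
    (W : MvPolynomial σ ℤ)
    (hW : W = (∑ p ∈ P, ∏ i ∈ p, X i) - ∑ q ∈ Q, ∏ i ∈ q, X i) :
    W.support.card = P.card + Q.card ∧
    (∀ m ∈ W.support, ∀ i : σ, m i ≤ 1) ∧
    (∀ m ∈ W.support, W.coeff m = 1 ∨ W.coeff m = -1) ∧
    (∀ i : σ, ∃ m₁ ∈ W.support, ∃ m₂ ∈ W.support,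
      0 < m₁ i ∧ 0 < m₂ i ∧ W.coeff m₁ = 1 ∧ W.coeff m₂ = -1 ∧
      ∀ m ∈ W.support, 0 < m i → m = m₁ ∨ m = m₂) :=
  stmt_9_general P Q hPpart hQpart hPQ W hW
end
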